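/- Fix γ > 0 and 1 ≤ p ≤ ∞. The set of periodic points of the differential operator d/dx, i.e. {g ∈ C^∞([0,γ]) : there exists m ≥ 1 with d^m g/dx^m = g}, is dense in (C^∞([0,γ]), ρ_p). -/

import Mathlib

open MeasureTheory Set Filter
open scoped ENNReal Topology

/-- The `L^p` distance of two functions over the interval `[a, b]`. -/
noncomputable def rho (a b : ℝ) (p : ℝ≥0∞) (f g : ℝ → ℝ) : ℝ :=
  (eLpNorm (fun x => f x - g x) p (volume.restrict (Icc a b))).toReal

/-!
By Weierstrass, `f` is uniformly close on `[0, γ]` to a polynomial `P`, and uniform closeness on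
a bounded interval implies `ρ_p`-closeness. For `N > deg P`, the solution of `g⁽ᴺ⁾ = g` with
`g⁽ʲ⁾(0) = P⁽ʲ⁾(0)` for `j < N` is `t ↦ (exp (t • S) v)₀`, where `S` is the cyclic shift of `ℝᴺ`
and `v j = j! * P.coeff j`. Its Taylor coefficients agree with those of `P` below degree `N` and
are bounded independently of `N`, so `g → P` uniformly on bounded sets as `N → ∞`.
-/

open NormedSpace
open scoped Nat Polynomial

section LinearFlow

variable {E : Type*} [NormedAddCommGroup E] [NormedSpace ℝ E] [CompleteSpace E]
  (T : E →L[ℝ] E) (ℓ : E →L[ℝ] ℝ)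

theorem hasDerivAt_exp_smul_apply (v : E) (t : ℝ) :
    HasDerivAt (fun s : ℝ => ℓ (exp (s • T) v)) (ℓ (exp (t • T) (T v))) t :=
  (ℓ.comp (ContinuousLinearMap.apply ℝ E v)).hasFDerivAt.comp_hasDerivAt t
    (hasDerivAt_exp_smul_const T t)

theorem iterate_deriv_exp_smul_apply (k : ℕ) (v : E) :
    deriv^[k] (fun s : ℝ => ℓ (exp (s • T) v)) = fun s => ℓ (exp (s • T) ((T ^ k) v)) := by
  induction k generalizing v with
  | zero => simp
  | succ k ih =>
    rw [Function.iterate_succ_apply,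
      funext fun t => (hasDerivAt_exp_smul_apply T ℓ v t).deriv, ih, pow_succ]
    rfl

theorem contDiff_exp_smul_apply (v : E) : ContDiff ℝ (⊤ : ℕ∞) fun s : ℝ => ℓ (exp (s • T) v) := by
  refine contDiff_iff_contDiffAt.2 fun t => ?_
  exact (ℓ.comp (ContinuousLinearMap.apply ℝ E v)).contDiff.contDiffAt.comp t
    ((exp_analytic (t • T)).contDiffAt.comp t (contDiff_id.smul contDiff_const).contDiffAt)

theorem hasSum_exp_smul_apply (v : E) (t : ℝ) :
    HasSum (fun n => t ^ n / n ! * ℓ ((T ^ n) v)) (ℓ (exp (t • T) v)) := by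
  convert (exp_series_hasSum_exp' (𝕂 := ℝ) (t • T)).mapL (ℓ.comp (ContinuousLinearMap.apply ℝ E v))
    using 1
  · funext n
    simp only [ContinuousLinearMap.comp_apply, ContinuousLinearMap.apply_apply, smul_pow,
      map_smul, smul_eq_mul]
    ring
  · rfl

end LinearFlow

section CyclicShift

open Fin.NatCast

variable (N : ℕ) [NeZero N]

noncomputable def cyclicShift : (Fin N → ℝ) →L[ℝ] (Fin N → ℝ) :=
  (LinearMap.funLeft ℝ ℝ (· + 1 : Fin N → Fin N)).toContinuousLinearMap

theorem cyclicShift_pow_apply (k : ℕ) (v : Fin N → ℝ) (i : Fin N) :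
    (cyclicShift N ^ k) v i = v (i + k) := by
  induction k generalizing v with
  | zero => simp
  | succ k ih =>
    rw [pow_succ, mul_apply_eq_comp, ih]
    simp [cyclicShift, LinearMap.funLeft_apply, add_assoc]

theorem cyclicShift_pow_self : cyclicShift N ^ N = 1 := by
  ext v i
  simp [cyclicShift_pow_apply]

end CyclicShift

theorem Polynomial.exists_abs_factorial_mul_coeff_le (P : ℝ[X]) :
    ∃ C, ∀ n, |n ! * P.coeff n| ≤ C := by
  refine ⟨∑ j ∈ P.support, |j ! * P.coeff j|, fun n => ?_⟩
  by_cases hn : n ∈ P.support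
  · exact Finset.single_le_sum (f := fun j => |j ! * P.coeff j|) (fun _ _ => abs_nonneg _) hn
  · rw [Polynomial.notMem_support_iff.1 hn, mul_zero, abs_zero]
    exact Finset.sum_nonneg fun _ _ => abs_nonneg _

theorem Polynomial.abs_sub_eval_le_of_hasSum (P : ℝ[X]) {a : ℕ → ℝ} {N : ℕ} {C R t s : ℝ}
    (hdeg : P.natDegree < N) (ha : ∀ n < N, a n = n ! * P.coeff n) (hC : ∀ n, |a n| ≤ C)
    (ht : |t| ≤ R) (hs : HasSum (fun n => t ^ n / n ! * a n) s) :
    |s - P.eval t| ≤ C * ∑' n, R ^ (n + N) / (n + N)! := by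
  have heval : P.eval t = ∑ n ∈ Finset.range N, t ^ n / n ! * a n := by
    rw [P.eval_eq_sum_range' hdeg]
    refine Finset.sum_congr rfl fun n hn => ?_
    rw [ha n (Finset.mem_range.1 hn)]
    field_simp
  have hC0 : 0 ≤ C := (abs_nonneg _).trans (hC 0)
  rw [← hs.tsum_eq, ← hs.summable.sum_add_tsum_nat_add N, heval, add_sub_cancel_left]
  have hbound : HasSum (fun n => C * (R ^ (n + N) / (n + N)!)) (C * ∑' n, R ^ (n + N) / (n + N)!) :=
    ((Real.summable_pow_div_factorial R).comp_injective (add_left_injective N)).hasSum.mul_left C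
  refine tsum_of_norm_bounded (f := fun n => t ^ (n + N) / (n + N)! * a (n + N)) hbound
    fun n => ?_
  rw [Real.norm_eq_abs, abs_mul, abs_div, abs_pow, Nat.abs_cast, mul_comm]
  gcongr
  exact hC _

open Fin.NatCast in
theorem Polynomial.exists_iterate_deriv_eq_self_near (P : ℝ[X]) (R : ℝ) {δ : ℝ} (hδ : 0 < δ) :
    ∃ g : ℝ → ℝ, ContDiff ℝ (⊤ : ℕ∞) g ∧ (∃ m, 1 ≤ m ∧ deriv^[m] g = g) ∧
      ∀ x, |x| ≤ R → |g x - P.eval x| ≤ δ := by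
  obtain ⟨C, hC⟩ := P.exists_abs_factorial_mul_coeff_le
  have htail : Tendsto (fun N => C * ∑' n, R ^ (n + N) / (n + N)!) atTop (𝓝 0) := by
    simpa using (tendsto_sum_nat_add fun n => R ^ n / n !).const_mul C
  obtain ⟨N, hN, hNδ⟩ := ((eventually_gt_atTop P.natDegree).and
    (htail.eventually (ge_mem_nhds hδ))).exists
  have : NeZero N := ⟨by omega⟩
  let v : Fin N → ℝ := fun j => (j : ℕ)! * P.coeff j
  let ℓ : (Fin N → ℝ) →L[ℝ] ℝ := ContinuousLinearMap.proj 0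
  refine ⟨fun t => ℓ (exp (t • cyclicShift N) v), contDiff_exp_smul_apply _ ℓ v,
    ⟨N, by omega, ?_⟩, fun x hx => ?_⟩
  · rw [iterate_deriv_exp_smul_apply, cyclicShift_pow_self, one_apply_eq_self]
  · have hcoeff (n : ℕ) :
        ℓ ((cyclicShift N ^ n) v) = (n : Fin N).val ! * P.coeff (n : Fin N) := by
      simp only [ℓ, ContinuousLinearMap.proj_apply, cyclicShift_pow_apply, zero_add, v]
    refine (P.abs_sub_eval_le_of_hasSum hN (fun n hn => ?_) (fun n => ?_) hx
      (hasSum_exp_smul_apply _ ℓ v x)).trans hNδ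
    · rw [hcoeff, Fin.val_cast_of_lt hn]
    · rw [hcoeff]
      exact hC _

theorem rho_le_of_forall_abs_sub_le {a b δ : ℝ} (p : ℝ≥0∞) {f g : ℝ → ℝ} (hδ : 0 ≤ δ)
    (h : ∀ x ∈ Icc a b, |f x - g x| ≤ δ) :
    rho a b p f g ≤ (volume (Icc a b) ^ p.toReal⁻¹).toReal * δ := by
  have hae : ∀ᵐ x ∂volume.restrict (Icc a b), ‖f x - g x‖ ≤ δ :=
    (ae_restrict_iff' measurableSet_Icc).2 (.of_forall h)
  have hle := eLpNorm_le_of_ae_bound (p := p) hae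
  rw [Measure.restrict_apply_univ] at hle
  have hfin : volume (Icc a b) ^ p.toReal⁻¹ * ENNReal.ofReal δ ≠ ∞ :=
    ENNReal.mul_ne_top (ENNReal.rpow_ne_top_of_nonneg (by positivity) (by simp [Real.volume_Icc]))
      ENNReal.ofReal_ne_top
  calc rho a b p f g ≤ (volume (Icc a b) ^ p.toReal⁻¹ * ENNReal.ofReal δ).toReal :=
        ENNReal.toReal_mono hfin hle
    _ = (volume (Icc a b) ^ p.toReal⁻¹).toReal * δ := by
        rw [ENNReal.toReal_mul, ENNReal.toReal_ofReal hδ]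

theorem exists_pos_forall_rho_lt (a b : ℝ) (p : ℝ≥0∞) {ε : ℝ} (hε : 0 < ε) :
    ∃ δ > 0, ∀ f g : ℝ → ℝ, (∀ x ∈ Icc a b, |f x - g x| ≤ δ) → rho a b p f g < ε := by
  set K := (volume (Icc a b) ^ p.toReal⁻¹).toReal
  have hK : 0 ≤ K := ENNReal.toReal_nonneg
  refine ⟨ε / (K + 1), by positivity, fun f g h =>
    (rho_le_of_forall_abs_sub_le p (by positivity) h).trans_lt ?_⟩
  rw [mul_div_assoc', div_lt_iff₀ (by positivity)]
  nlinarith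

theorem stmt7_general (γ : ℝ) (p : ℝ≥0∞) :
    ∀ f : ℝ → ℝ, ContDiff ℝ (⊤ : ℕ∞) f → ∀ ε > (0 : ℝ),
      ∃ g : ℝ → ℝ, ContDiff ℝ (⊤ : ℕ∞) g ∧
        (∃ m : ℕ, 1 ≤ m ∧ Set.EqOn (deriv^[m] g) g (Icc 0 γ)) ∧
        rho 0 γ p f g < ε := by
  intro f hf ε hε
  obtain ⟨δ, hδ, hρ⟩ := exists_pos_forall_rho_lt 0 γ p hε
  obtain ⟨P, hP⟩ := exists_polynomial_near_of_continuousOn 0 γ f hf.continuous.continuousOn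
    (δ / 2) (half_pos hδ)
  obtain ⟨g, hg, ⟨m, hm, hper⟩, hgP⟩ := P.exists_iterate_deriv_eq_self_near γ (half_pos hδ)
  refine ⟨g, hg, ⟨m, hm, fun x _ => congrFun hper x⟩, hρ f g fun x hx => ?_⟩
  have hxγ : |x| ≤ γ := abs_le.2 ⟨by linarith [hx.1, hx.2], hx.2⟩
  calc |f x - g x| ≤ |f x - P.eval x| + |P.eval x - g x| := abs_sub_le _ _ _
    _ ≤ δ / 2 + δ / 2 := by
        rw [abs_sub_comm (P.eval x), abs_sub_comm (f x)]
        exact add_le_add (hP x hx).le (hgP x hxγ)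
    _ = δ := add_halves δ

/-- Fix `γ > 0` and `1 ≤ p ≤ ∞`. The set of periodic points of `d/dx`
in `C^∞([0, γ])`, i.e. smooth functions `g` with `dᵐg/dxᵐ = g` on `[0, γ]` for some
`m ≥ 1`, is dense in `(C^∞([0, γ]), ρ_p)`. -/
theorem stmt7 (γ : ℝ) (hγ : 0 < γ) (p : ℝ≥0∞) (hp : 1 ≤ p) :
    ∀ f : ℝ → ℝ, ContDiff ℝ (⊤ : ℕ∞) f → ∀ ε > (0 : ℝ),
      ∃ g : ℝ → ℝ, ContDiff ℝ (⊤ : ℕ∞) g ∧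
        (∃ m : ℕ, 1 ≤ m ∧ Set.EqOn (deriv^[m] g) g (Icc 0 γ)) ∧
        rho 0 γ p f g < ε :=
  stmt7_general γ p
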